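/- Let d be a positive integer and l ∈ ℚ. Assume that every rational polytope Q ⊂ ℝ^d of dimension d all of whose edges have lattice length at least l is 4-convex-normal. Then every lattice polytope P ⊂ ℝ^d of dimension d all of whose edges have lattice length at least l is integrally closed. -/

import Mathlib

open Set Metric Pointwise

noncomputable section

/-- Points of the Euclidean space `ℝ^d`. -/
abbrev Pt (d : ℕ) : Type := EuclideanSpace ℝ (Fin d)

/-- `x` is a point of the standard lattice `ℤ^d ⊂ ℝ^d`. -/
def IsLatticePt {d : ℕ} (x : Pt d) : Prop := ∀ i, ∃ n : ℤ, x i = (n : ℝ)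

/-- `x` has rational coordinates. -/
def IsRatPt {d : ℕ} (x : Pt d) : Prop := ∀ i, ∃ q : ℚ, x i = (q : ℝ)

/-- `P` is a polytope with rational vertices. -/
def IsRationalPolytope {d : ℕ} (P : Set (Pt d)) : Prop :=
  ∃ V : Finset (Pt d), (∀ v ∈ V, IsRatPt v) ∧ P = convexHull ℝ (V : Set (Pt d))

/-- `P` is a polytope with integral vertices. -/
def IsLatticePolytope {d : ℕ} (P : Set (Pt d)) : Prop :=
  ∃ V : Finset (Pt d), (∀ v ∈ V, IsLatticePt v) ∧ P = convexHull ℝ (V : Set (Pt d))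

/-- The (affine) dimension of a set. -/
def polyDim {d : ℕ} (P : Set (Pt d)) : ℕ := Module.finrank ℝ (vectorSpan ℝ P)

/-- An integer vector is primitive if its components are coprime. -/
def IsPrimitive {d : ℕ} (u : Fin d → ℤ) : Prop := Finset.univ.gcd u = 1

/-- The segment `[v, w]` has lattice length at least `lb`: whenever `w - v = t • u` with
`u` a primitive integer vector and `t > 0`, one has `t ≥ lb`. -/
def LatLenGE {d : ℕ} (v w : Pt d) (lb : ℝ) : Prop :=
  ∀ (u : Fin d → ℤ) (t : ℝ), 0 < t → IsPrimitive u →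
    (∀ i, w i - v i = t * (u i : ℝ)) → lb ≤ t

/-- The segment `[v, w]` has lattice length greater than `lb`. -/
def LatLenGT {d : ℕ} (v w : Pt d) (lb : ℝ) : Prop :=
  ∀ (u : Fin d → ℤ) (t : ℝ), 0 < t → IsPrimitive u →
    (∀ i, w i - v i = t * (u i : ℝ)) → lb < t

/-- `[v, w]` is an edge (a one-dimensional face) of `P`. -/
def IsEdge {d : ℕ} (P : Set (Pt d)) (v w : Pt d) : Prop :=
  v ≠ w ∧ IsExtreme ℝ P (segment ℝ v w)

/-- Every edge of `P` has lattice length at least `lb`. -/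
def EdgeLengthsGE {d : ℕ} (P : Set (Pt d)) (lb : ℝ) : Prop :=
  ∀ v w, IsEdge P v w → LatLenGE v w lb

/-- Every edge of `P` has lattice length greater than `lb`. -/
def EdgeLengthsGT {d : ℕ} (P : Set (Pt d)) (lb : ℝ) : Prop :=
  ∀ v w, IsEdge P v w → LatLenGT v w lb

/-- The union `⋃ (x + P)` over all vertices `v` of `P` and all
`x ∈ (c-1)P ∩ ((c-1)v + ℤ^d)`. -/
def cnUnion {d : ℕ} (P : Set (Pt d)) (c : ℝ) : Set (Pt d) :=
  {y | ∃ v ∈ Set.extremePoints ℝ P, ∃ x ∈ (c - 1) • P,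
    IsLatticePt (x - (c - 1) • v) ∧ ∃ p ∈ P, y = x + p}

/-- `P` is `k`-convex-normal: `CN(d,k)`. -/
def ConvexNormal {d : ℕ} (k : ℚ) (P : Set (Pt d)) : Prop :=
  ∀ c : ℚ, 2 ≤ c → c ≤ k → (c : ℝ) • P = cnUnion P (c : ℝ)

/-- `P` is integrally closed. -/
def IntegrallyClosed {d : ℕ} (P : Set (Pt d)) : Prop :=
  ∀ c : ℕ, 0 < c → ∀ z ∈ (c : ℝ) • P, IsLatticePt z →
    ∃ x : Fin c → Pt d, (∀ i, x i ∈ P ∧ IsLatticePt (x i)) ∧ ∑ i, x i = z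

/-- A face of a polytope: a closed convex extreme subset. -/
def IsFaceOf {d : ℕ} (P F : Set (Pt d)) : Prop :=
  IsExtreme ℝ P F ∧ Convex ℝ F ∧ IsClosed F

/-- A facet: a face of codimension one. -/
def IsFacetOf {d : ℕ} (P F : Set (Pt d)) : Prop :=
  IsFaceOf P F ∧ polyDim F + 1 = polyDim P

/-- `width_F(P)`: the maximum over vertices `v` of `P` of `dist(v, aff F)`. -/
def facetWidth {d : ℕ} (P F : Set (Pt d)) : ℝ :=
  sSup ((fun v => infDist v ((affineSpan ℝ F : AffineSubspace ℝ (Pt d)) : Set (Pt d))) ''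
    Set.extremePoints ℝ P)

/-- `U_P(F, ε)`: the `ε`-layer of `P` along (the affine hull of) `F`. -/
def layer {d : ℕ} (P F : Set (Pt d)) (ε : ℝ) : Set (Pt d) :=
  {x ∈ P | infDist x ((affineSpan ℝ F : AffineSubspace ℝ (Pt d)) : Set (Pt d)) ≤ ε}

/-- `P` is `k`-boundary-convex-normal: `BCN(d,k)`. -/
def BCN {d : ℕ} (k : ℚ) (P : Set (Pt d)) : Prop :=
  ∀ F, IsFacetOf P F → ∀ c : ℚ, 2 ≤ c → c ≤ k →
    layer ((c : ℝ) • P) ((c : ℝ) • F) (facetWidth P F / ((d : ℝ) + 1)) ⊆ cnUnion P (c : ℝ)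

/-- The parallelepiped `z + {Σ λᵢ • wᵢ : 0 ≤ λᵢ ≤ 1}`. -/
def Parallelepiped {d m : ℕ} (z : Pt d) (w : Fin m → Pt d) : Set (Pt d) :=
  {x | ∃ lam : Fin m → ℝ, (∀ i, lam i ∈ Icc (0 : ℝ) 1) ∧ x = z + ∑ i, lam i • w i}

/-- `L` is a full-dimensional lattice parallelepiped. -/
def IsLatticeParallelepiped {d : ℕ} (L : Set (Pt d)) : Prop :=
  ∃ (z : Pt d) (w : Fin d → Pt d), IsLatticePt z ∧ (∀ i, IsLatticePt (w i)) ∧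
    LinearIndependent ℝ w ∧ L = Parallelepiped z w

/-! Strong induction on the dilation factor `m`. For `m ≥ 2` choose `L = ⌈m/4⌉`, so that
`c = m/L ∈ [2, 4]`. The dilate `L • P` is a rational polytope of full dimension whose edges are
no shorter than those of `P`, hence `4`-convex-normal; applied with factor `c` it writes a lattice
point `z ∈ m • P = c • (L • P)` as `x + p` with `p ∈ L • P` and `x ∈ (m - L) • P` differing from
`(m - L) • v` by a lattice vector, for a vertex `v` of `P`. As `v` is a lattice point, so are `x`
and `p = z - x`, and the induction hypothesis applies to both. -/

section Scaling

variable {𝕜 E : Type*} [Field 𝕜] [LinearOrder 𝕜] [IsStrictOrderedRing 𝕜]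
  [AddCommGroup E] [Module 𝕜 E]

theorem smul_openSegment (a : 𝕜) (x y : E) :
    a • openSegment 𝕜 x y = openSegment 𝕜 (a • x) (a • y) :=
  image_openSegment 𝕜 (LinearMap.lsmul 𝕜 E a).toAffineMap x y

theorem smul_segment (a : 𝕜) (x y : E) :
    a • segment 𝕜 x y = segment 𝕜 (a • x) (a • y) :=
  image_segment 𝕜 (LinearMap.lsmul 𝕜 E a).toAffineMap x y

theorem IsExtreme.smul {a : 𝕜} (ha : a ≠ 0) {A B : Set E} (h : IsExtreme 𝕜 A B) :
    IsExtreme 𝕜 (a • A) (a • B) := by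
  refine ⟨smul_set_mono h.subset, ?_⟩
  rintro _ ⟨x₁, hx₁, rfl⟩ _ ⟨x₂, hx₂, rfl⟩ _ ⟨x, hx, rfl⟩ hseg
  rw [← smul_openSegment, smul_mem_smul_set_iff₀ ha] at hseg
  exact smul_mem_smul_set (h.left_mem_of_mem_openSegment hx₁ hx₂ hx hseg)

theorem extremePoints_smul {a : 𝕜} (ha : a ≠ 0) (A : Set E) :
    extremePoints 𝕜 (a • A) = a • extremePoints 𝕜 A :=
  (image_extremePoints (LinearEquiv.smulOfNeZero 𝕜 E a ha) A).symm

end Scaling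

variable {d : ℕ}

namespace IsLatticePt

variable {x y : Pt d}

theorem add (hx : IsLatticePt x) (hy : IsLatticePt y) : IsLatticePt (x + y) := fun i => by
  obtain ⟨m, hm⟩ := hx i
  obtain ⟨n, hn⟩ := hy i
  exact ⟨m + n, by simp [hm, hn]⟩

theorem sub (hx : IsLatticePt x) (hy : IsLatticePt y) : IsLatticePt (x - y) := fun i => by
  obtain ⟨m, hm⟩ := hx i
  obtain ⟨n, hn⟩ := hy i
  exact ⟨m - n, by simp [hm, hn]⟩

theorem natCast_smul (n : ℕ) (hx : IsLatticePt x) : IsLatticePt ((n : ℝ) • x) := fun i => by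
  obtain ⟨m, hm⟩ := hx i
  exact ⟨n * m, by simp [hm]⟩

theorem isRatPt (hx : IsLatticePt x) : IsRatPt x := fun i => by
  obtain ⟨m, hm⟩ := hx i
  exact ⟨m, by simp [hm]⟩

end IsLatticePt

theorem polyDim_smul {a : ℝ} (ha : a ≠ 0) (P : Set (Pt d)) : polyDim (a • P) = polyDim P := by
  let e := LinearEquiv.smulOfNeZero ℝ (Pt d) a ha
  have hspan : vectorSpan ℝ (a • P) = (vectorSpan ℝ P).map (e : Pt d →ₗ[ℝ] Pt d) :=
    (AffineMap.map_vectorSpan (e : Pt d →ₗ[ℝ] Pt d).toAffineMap).symm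
  rw [polyDim, polyDim, hspan, LinearEquiv.finrank_map_eq]

namespace IsLatticePolytope

variable {P : Set (Pt d)}

theorem isRationalPolytope (hP : IsLatticePolytope P) : IsRationalPolytope P := by
  obtain ⟨V, hV, rfl⟩ := hP
  exact ⟨V, fun v hv => (hV v hv).isRatPt, rfl⟩

theorem natCast_smul (hP : IsLatticePolytope P) (n : ℕ) : IsLatticePolytope ((n : ℝ) • P) := by
  obtain ⟨V, hV, rfl⟩ := hP
  classical
  refine ⟨V.image ((n : ℝ) • ·), ?_, ?_⟩
  · simp only [Finset.mem_image]
    rintro _ ⟨v, hv, rfl⟩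
    exact (hV v hv).natCast_smul n
  · rw [Finset.coe_image, ← convexHull_smul]
    rfl

theorem isLatticePt_of_mem_extremePoints (hP : IsLatticePolytope P) {v : Pt d}
    (hv : v ∈ extremePoints ℝ P) : IsLatticePt v := by
  obtain ⟨V, hV, rfl⟩ := hP
  exact hV v (extremePoints_convexHull_subset hv)

end IsLatticePolytope

theorem IsEdge.smul {P : Set (Pt d)} {v w : Pt d} {a : ℝ} (ha : a ≠ 0) (h : IsEdge P v w) :
    IsEdge (a • P) (a • v) (a • w) :=
  ⟨(smul_right_injective (Pt d) ha).ne h.1, smul_segment a v w ▸ h.2.smul ha⟩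

theorem LatLenGE.smul_of_one_le {v w : Pt d} {lb a : ℝ} (h : LatLenGE v w lb) (ha : 1 ≤ a) :
    LatLenGE (a • v) (a • w) lb := by
  intro u t ht hu hvw
  have ha0 : 0 < a := by linarith
  refine (h u (t / a) (by positivity) hu fun i => ?_).trans (div_le_self ht.le ha)
  have := hvw i
  simp only [PiLp.smul_apply, smul_eq_mul, ← mul_sub] at this
  field_simp
  linarith

theorem EdgeLengthsGE.smul_of_one_le {P : Set (Pt d)} {lb a : ℝ} (h : EdgeLengthsGE P lb)
    (ha : 1 ≤ a) : EdgeLengthsGE (a • P) lb := by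
  intro v w hvw
  have ha0 : a ≠ 0 := by positivity
  have hinv := hvw.smul (inv_ne_zero ha0)
  rw [inv_smul_smul₀ ha0] at hinv
  simpa [smul_inv_smul₀ ha0] using (h _ _ hinv).smul_of_one_le ha

theorem exists_add_of_mem_cnUnion_natCast_smul {P : Set (Pt d)}
    (hP : ∀ v ∈ extremePoints ℝ P, IsLatticePt v) {L n : ℕ} (hL : L ≠ 0) {c : ℝ}
    (hc : (c - 1) * L = n) {y : Pt d} (hy : y ∈ cnUnion ((L : ℝ) • P) c) :
    ∃ x ∈ (n : ℝ) • P, IsLatticePt x ∧ ∃ p ∈ (L : ℝ) • P, y = x + p := by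
  obtain ⟨_, hv, x, hx, hxv, p, hp, rfl⟩ := hy
  rw [extremePoints_smul (Nat.cast_ne_zero.2 hL)] at hv
  obtain ⟨v, hv, rfl⟩ := hv
  rw [smul_smul, hc] at hx hxv
  refine ⟨x, hx, ?_, p, hp, rfl⟩
  simpa using hxv.add ((hP v hv).natCast_smul n)

def IsSumOfLatticePoints (P : Set (Pt d)) (m : ℕ) (z : Pt d) : Prop :=
  ∃ x : Fin m → Pt d, (∀ i, x i ∈ P ∧ IsLatticePt (x i)) ∧ ∑ i, x i = z

namespace IsSumOfLatticePoints

variable {P : Set (Pt d)}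

theorem zero : IsSumOfLatticePoints P 0 0 := ⟨Fin.elim0, Fin.rec0, rfl⟩

theorem one {z : Pt d} (hz : z ∈ P) (hzl : IsLatticePt z) : IsSumOfLatticePoints P 1 z :=
  ⟨fun _ => z, fun _ => ⟨hz, hzl⟩, by simp⟩

theorem add {a b : ℕ} {y z : Pt d} (hy : IsSumOfLatticePoints P a y)
    (hz : IsSumOfLatticePoints P b z) : IsSumOfLatticePoints P (a + b) (y + z) := by
  obtain ⟨x, hx, rfl⟩ := hy
  obtain ⟨x', hx', rfl⟩ := hz
  exact ⟨Fin.append x x', Fin.addCases (by simpa using hx) (by simpa using hx'),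
    by simp [Fin.sum_univ_add]⟩

end IsSumOfLatticePoints

namespace IsLatticePolytope

variable {P : Set (Pt d)}

theorem exists_add_of_convexNormal (hP : IsLatticePolytope P) {L m : ℕ}
    (hCN : ConvexNormal 4 ((L : ℝ) • P)) (hLm : 2 * L ≤ m) (hmL : m ≤ 4 * L) (hL : L ≠ 0)
    {z : Pt d} (hz : z ∈ (m : ℝ) • P) (hzl : IsLatticePt z) :
    ∃ x ∈ ((m - L : ℕ) : ℝ) • P, IsLatticePt x ∧
      ∃ p ∈ (L : ℝ) • P, IsLatticePt p ∧ z = x + p := by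
  have hLQ : (0 : ℚ) < L := by positivity
  have hcR : ((m / L : ℚ) : ℝ) = m / L := by push_cast; rfl
  have hz' : z ∈ ((m / L : ℚ) : ℝ) • ((L : ℝ) • P) := by
    rwa [smul_smul, hcR, div_mul_cancel₀ _ (by positivity)]
  rw [hCN _ (by rw [le_div_iff₀ hLQ]; exact_mod_cast hLm)
    (by rw [div_le_iff₀ hLQ]; exact_mod_cast hmL)] at hz'
  obtain ⟨x, hx, hxl, p, hp, rfl⟩ := exists_add_of_mem_cnUnion_natCast_smul
    (fun v hv => hP.isLatticePt_of_mem_extremePoints hv) hL (n := m - L)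
    (by rw [hcR, Nat.cast_sub (by omega)]; field_simp) hz'
  exact ⟨x, hx, hxl, p, hp, by simpa using hzl.sub hxl, rfl⟩

theorem isSumOfLatticePoints (hP : IsLatticePolytope P)
    (hCN : ∀ L : ℕ, L ≠ 0 → ConvexNormal 4 ((L : ℝ) • P)) (m : ℕ) {z : Pt d}
    (hz : z ∈ (m : ℝ) • P) (hzl : IsLatticePt z) : IsSumOfLatticePoints P m z := by
  induction m using Nat.strong_induction_on generalizing z with
  | _ m ih =>
    match m, ih, hz with
    | 0, _, hz =>
      obtain ⟨_, _, rfl⟩ := hz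
      simpa using IsSumOfLatticePoints.zero
    | 1, _, hz => exact .one (by simpa using hz) hzl
    | m + 2, ih, hz =>
      -- `L = ⌈(m + 2) / 4⌉`, so that `(m + 2) / L ∈ [2, 4]`
      have hL : (m + 5) / 4 ≠ 0 := by omega
      obtain ⟨x, hx, hxl, p, hp, hpl, rfl⟩ :=
        hP.exists_add_of_convexNormal (hCN _ hL) (by omega) (by omega) hL hz hzl
      have := (ih _ (by omega) hx hxl).add (ih _ (by omega) hp hpl)
      rwa [Nat.sub_add_cancel (by omega)] at this

end IsLatticePolytope

theorem statement17_general (d : ℕ) (l : ℚ)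
    (hyp : ∀ Q : Set (Pt d), IsRationalPolytope Q → polyDim Q = d →
      EdgeLengthsGE Q (l : ℝ) → ConvexNormal 4 Q) :
    ∀ P : Set (Pt d), IsLatticePolytope P → polyDim P = d →
      EdgeLengthsGE P (l : ℝ) → IntegrallyClosed P := by
  intro P hP hdim hedge c _ z hz hzl
  refine hP.isSumOfLatticePoints (fun L hL => hyp _ (hP.natCast_smul L).isRationalPolytope
    ?_ (hedge.smul_of_one_le ?_)) c hz hzl
  · rwa [polyDim_smul (by positivity)]
  · exact_mod_cast Nat.one_le_iff_ne_zero.2 hL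

/-- Lemma 6.2. If every rational `d`-polytope with edges of lattice length
`≥ l` is `4`-convex-normal, then every lattice `d`-polytope with edges of lattice length `≥ l`
is integrally closed. -/
theorem statement17 (d : ℕ) (hd : 0 < d) (l : ℚ)
    (hyp : ∀ Q : Set (Pt d), IsRationalPolytope Q → polyDim Q = d →
      EdgeLengthsGE Q (l : ℝ) → ConvexNormal 4 Q) :
    ∀ P : Set (Pt d), IsLatticePolytope P → polyDim P = d →
      EdgeLengthsGE P (l : ℝ) → IntegrallyClosed P :=
  statement17_general d l hyp
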